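/- arXiv:1711.08934 — 3 statements merged into one kernel-verified Lean document; each statement's English description precedes it below -/
import Mathlib

section
/- Let t ∈ (−1,1) \ {0}, and define γ_t : [0, 2π) → S² by γ_t(θ) = (√(1−t²) cos θ, √(1−t²) sin θ, t). For θ ∈ [0, 2π) let V_θ^t = γ_t(θ)^⊥, let π_θ^t be the orthogonal projection of ℝ³ onto V_θ^t, and write π_θ = π_θ^{1/√2}, V_θ = V_θ^{1/√2}. Then there exists an invertible linear map B_t : ℝ³ → ℝ³ depending only on t, and for each θ an invertible linear map A_θ^t : V_θ → V_θ^t, such that π_θ^t = A_θ^t ∘ π_θ ∘ B_t for all θ ∈ [0, 2π). Moreover one may take B_t(x, y, r) = (x, y, r√(1−t²)/t). -/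
open MeasureTheory Metric Real

/-- `ℝ³` as a Euclidean space. -/
noncomputable abbrev E3 := EuclideanSpace ℝ (Fin 3)

/-- The vector `(a, b, c) ∈ ℝ³`. -/
noncomputable def vec3 (a b c : ℝ) : E3 := (WithLp.equiv 2 (Fin 3 → ℝ)).symm ![a, b, c]

/-- The unit vector `γ_t(θ) = (√(1−t²) cos θ, √(1−t²) sin θ, t)`. -/
noncomputable def gammaT (t θ : ℝ) : E3 :=
  vec3 (Real.sqrt (1 - t ^ 2) * Real.cos θ) (Real.sqrt (1 - t ^ 2) * Real.sin θ) t

/-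
If a linear automorphism `B` carries `K` onto `L`, then `π_{Kᗮ} = A ∘ π_{Lᗮ} ∘ B` with
`A u = π_{Kᗮ} (B⁻¹ u)`: the component of `B z` in `L` is sent by `B⁻¹` into `K`, which `π_{Kᗮ}`
kills. `A` is injective because `π_{Kᗮ} (B⁻¹ u) = 0` puts `u` in `L ∩ Lᗮ = 0`, and surjective
because the identity itself, applied to `z ∈ Kᗮ`, exhibits `z` as a value of `A`.
The map `B_t` fixes the horizontal components and rescales the vertical one so that
`B_t (γ_t θ)` is a multiple of `γ_{1/√2} θ`; hence it carries the line `ℝ γ_t(θ)` onto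
`ℝ γ_{1/√2}(θ)` for every `θ` at once.
-/

namespace Submodule

variable {𝕜 E : Type*} [RCLike 𝕜] [NormedAddCommGroup E] [InnerProductSpace 𝕜 E]
  {K : Submodule 𝕜 E} [K.HasOrthogonalProjection]

theorem orthogonalProjectionOnto_orthogonal_symm_apply_eq_zero (B : E ≃ₗ[𝕜] E) {y : E}
    (hy : y ∈ K.map (B : E →ₗ[𝕜] E)) : Kᗮ.orthogonalProjectionOnto (B.symm y) = 0 :=
  orthogonalProjectionOnto_orthogonal_apply_eq_zero ((mem_map_equiv K).mp hy)

theorem exists_linearEquiv_orthogonalProjectionOnto_orthogonal_eq_comp {L : Submodule 𝕜 E}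
    [L.HasOrthogonalProjection] (B : E ≃ₗ[𝕜] E) (hKL : K.map (B : E →ₗ[𝕜] E) = L) :
    ∃ A : Lᗮ ≃ₗ[𝕜] Kᗮ, ∀ z : E,
      Kᗮ.orthogonalProjectionOnto z = A (Lᗮ.orthogonalProjectionOnto (B z)) := by
  let A₀ : Lᗮ →ₗ[𝕜] Kᗮ :=
    Kᗮ.orthogonalProjectionOnto.toLinearMap ∘ₗ B.symm.toLinearMap ∘ₗ Lᗮ.subtype
  have hA₀ : ∀ z : E, Kᗮ.orthogonalProjectionOnto z = A₀ (Lᗮ.orthogonalProjectionOnto (B z)) := by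
    intro z
    change _ = Kᗮ.orthogonalProjectionOnto (B.symm (Lᗮ.starProjection (B z)))
    rw [starProjection_orthogonal_val, map_sub, B.symm_apply_apply, map_sub,
      orthogonalProjectionOnto_orthogonal_symm_apply_eq_zero B
        (hKL.ge (L.starProjection_apply_mem _)), sub_zero]
  have hinj : Function.Injective A₀ := by
    refine (injective_iff_map_eq_zero A₀).mpr fun u hu => ?_
    have hBu : B.symm u ∈ K := by
      simpa [A₀, orthogonalProjectionOnto_eq_zero_iff, orthogonal_orthogonal] using hu
    have huL : (u : E) ∈ L := hKL.le ((mem_map_equiv K).mpr hBu)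
    exact Subtype.ext (inner_self_eq_zero.mp (u.2 u huL))
  have hsurj : Function.Surjective A₀ := fun u =>
    ⟨_, by rw [← hA₀, orthogonalProjectionOnto_mem_subspace_eq_self]⟩
  exact ⟨LinearEquiv.ofBijective A₀ ⟨hinj, hsurj⟩, hA₀⟩

end Submodule

@[simp] theorem vec3_apply_zero (a b c : ℝ) : vec3 a b c 0 = a := rfl
@[simp] theorem vec3_apply_one (a b c : ℝ) : vec3 a b c 1 = b := rfl
@[simp] theorem vec3_apply_two (a b c : ℝ) : vec3 a b c 2 = c := rfl

theorem vec3_smul (r a b c : ℝ) : r • vec3 a b c = vec3 (r * a) (r * b) (r * c) := by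
  ext i
  fin_cases i <;> rfl

noncomputable def scaleThird (c : ℝ) (hc : c ≠ 0) : E3 ≃ₗ[ℝ] E3 where
  toFun z := vec3 (z 0) (z 1) (z 2 * c)
  invFun z := vec3 (z 0) (z 1) (z 2 * c⁻¹)
  map_add' x y := by
    ext i
    fin_cases i <;> simp [vec3, add_mul]
  map_smul' r x := by
    ext i
    fin_cases i <;> simp [vec3, mul_assoc]
  left_inv z := by
    ext i
    fin_cases i <;> simp [vec3, hc]
  right_inv z := by
    ext i
    fin_cases i <;> simp [vec3, hc]

theorem scaleThird_apply (c : ℝ) (hc : c ≠ 0) (z : E3) :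
    scaleThird c hc z = vec3 (z 0) (z 1) (z 2 * c) := rfl

theorem sqrt_one_sub_inv_sqrt_two_sq : √(1 - (√2)⁻¹ ^ 2) = (√2)⁻¹ := by
  rw [inv_pow, sq_sqrt zero_le_two, ← sqrt_inv]
  norm_num

theorem scaleThird_gammaT {t : ℝ} (ht0 : t ≠ 0) (hc : √(1 - t ^ 2) / t ≠ 0) (θ : ℝ) :
    scaleThird (√(1 - t ^ 2) / t) hc (gammaT t θ)
      = (√2 * √(1 - t ^ 2)) • gammaT (√2)⁻¹ θ := by
  have h2 : √2 ≠ 0 := by positivity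
  rw [scaleThird_apply, gammaT, gammaT, sqrt_one_sub_inv_sqrt_two_sq, vec3_smul]
  congr 1 <;> simp only [vec3_apply_zero, vec3_apply_one, vec3_apply_two] <;> field_simp

theorem map_scaleThird_span_gammaT {t : ℝ} (hs : √(1 - t ^ 2) ≠ 0) (ht0 : t ≠ 0)
    (hc : √(1 - t ^ 2) / t ≠ 0) (θ : ℝ) :
    (ℝ ∙ gammaT t θ).map (scaleThird (√(1 - t ^ 2) / t) hc : E3 →ₗ[ℝ] E3)
      = ℝ ∙ gammaT (√2)⁻¹ θ := by
  rw [← Submodule.span_image, Set.image_singleton, LinearEquiv.coe_coe, scaleThird_gammaT ht0,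
    Submodule.span_singleton_smul_eq (mul_ne_zero (by positivity) hs).isUnit]

/-- For `t ∈ (−1,1) \ {0}` there is an invertible linear `B_t : ℝ³ → ℝ³`
(given by `B_t(x,y,r) = (x, y, r√(1−t²)/t)`), and for each `θ ∈ [0,2π)` an invertible linear
`A_θ^t : V_θ → V_θ^t` (where `V_θ^t = γ_t(θ)^⊥` and `V_θ = V_θ^{1/√2}`), such that
`π_θ^t = A_θ^t ∘ π_θ ∘ B_t`. -/
theorem stmt3 (t : ℝ) (ht : t ∈ Set.Ioo (-1 : ℝ) 1) (ht0 : t ≠ 0) :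
    ∃ B : E3 ≃ₗ[ℝ] E3,
      (∀ z : E3, B z = vec3 (z 0) (z 1) (z 2 * Real.sqrt (1 - t ^ 2) / t)) ∧
      ∀ θ ∈ Set.Ico (0 : ℝ) (2 * π),
        ∃ A : (ℝ ∙ gammaT (Real.sqrt 2)⁻¹ θ)ᗮ ≃ₗ[ℝ] (ℝ ∙ gammaT t θ)ᗮ,
          ∀ z : E3,
            Submodule.orthogonalProjection (ℝ ∙ gammaT t θ)ᗮ z
              = A (Submodule.orthogonalProjection (ℝ ∙ gammaT (Real.sqrt 2)⁻¹ θ)ᗮ (B z)) := by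
  have hs : √(1 - t ^ 2) ≠ 0 := (sqrt_pos.mpr (by nlinarith [ht.1, ht.2])).ne'
  have hc : √(1 - t ^ 2) / t ≠ 0 := div_ne_zero hs ht0
  refine ⟨scaleThird _ hc, fun z => by rw [scaleThird_apply, mul_div_assoc], fun θ _ => ?_⟩
  exact Submodule.exists_linearEquiv_orthogonalProjectionOnto_orthogonal_eq_comp _
    (map_scaleThird_span_gammaT hs ht0 hc θ)
end

section
/- There exists an absolute constant C ≥ 1 with the following property. Let z ∈ ℝ³ with |z| = 1, let δ > 0, and suppose θ₁, θ₂ ∈ [0, 2π) satisfy |π_{θ₁}(z)| ≤ δ and |π_{θ₂}(z)| ≤ δ, where π_θ is the orthogonal projection of ℝ³ onto the plane orthogonal to γ(θ) = (cos θ, sin θ, 1)/√2. Then |(cos θ₁, sin θ₁, 1) − (cos θ₂, sin θ₂, 1)| ≤ Cδ. -/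
open MeasureTheory Metric Real

/-- The unit vector `γ(θ) = (cos θ, sin θ, 1)/√2`. -/
noncomputable def gam (θ : ℝ) : E3 := (Real.sqrt 2)⁻¹ • vec3 (Real.cos θ) (Real.sin θ) 1

/-- The orthogonal projection `π_θ` of `ℝ³` onto the plane `γ(θ)^⊥`,
viewed as a map `ℝ³ → ℝ³`. -/
noncomputable def projθ (θ : ℝ) (z : E3) : E3 := (Submodule.orthogonalProjectionOnto (ℝ ∙ gam θ)ᗮ z : E3)

/-!
If `z` lies within `δ` of the lines through the unit vectors `u` and `v`, then
`a • u - b • v` is small, where `a = ⟪u, z⟫` and `b = ⟪v, z⟫`. When `u` and `v` have the same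
positive component `c` along a fixed unit vector `e`, that component controls `a - b`, and then
`a • (u - v) = (a • u - b • v) + (b - a) • v` controls `u - v` as long as `|a|` is bounded below,
which it is because `z` is a unit vector. The cone directions `γ(θ)` all have component `1/√2`
along the vertical axis.
-/

section InnerProductSpace

variable {F : Type*} [NormedAddCommGroup F] [InnerProductSpace ℝ F]

open scoped RealInnerProductSpace

lemma abs_sub_mul_le_norm_smul_sub_smul {u v e : F} {a b c : ℝ} (he : ‖e‖ = 1)
    (hu : ⟪u, e⟫ = c) (hv : ⟪v, e⟫ = c) : |a - b| * |c| ≤ ‖a • u - b • v‖ := by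
  have hinner : ⟪a • u - b • v, e⟫ = (a - b) * c := by
    rw [inner_sub_left, real_inner_smul_left, real_inner_smul_left, hu, hv]
    ring
  simpa [hinner, he, abs_mul] using abs_real_inner_le_norm (a • u - b • v) e

lemma abs_mul_norm_sub_le {u v e : F} {a b c : ℝ} (hv : ‖v‖ = 1) (he : ‖e‖ = 1)
    (hue : ⟪u, e⟫ = c) (hve : ⟪v, e⟫ = c) (hc : 0 < c) :
    |a| * ‖u - v‖ ≤ (1 + c⁻¹) * ‖a • u - b • v‖ := by
  have hab : |a - b| ≤ c⁻¹ * ‖a • u - b • v‖ := by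
    rw [le_inv_mul_iff₀ hc, mul_comm]
    simpa [abs_of_pos hc] using abs_sub_mul_le_norm_smul_sub_smul (a := a) (b := b) he hue hve
  calc |a| * ‖u - v‖ = ‖(a • u - b • v) + (b - a) • v‖ := by
        rw [← Real.norm_eq_abs, ← norm_smul]
        congr 1
        module
    _ ≤ ‖a • u - b • v‖ + |a - b| := by
        grw [norm_add_le, norm_smul, hv, Real.norm_eq_abs, abs_sub_comm, mul_one]
    _ ≤ (1 + c⁻¹) * ‖a • u - b • v‖ := by linarith

lemma norm_sub_inner_smul_sq {u : F} (hu : ‖u‖ = 1) (z : F) :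
    ‖z - ⟪u, z⟫ • u‖ ^ 2 = ‖z‖ ^ 2 - ⟪u, z⟫ ^ 2 := by
  rw [norm_sub_sq_real, norm_smul, hu, real_inner_smul_right, real_inner_comm, Real.norm_eq_abs,
    mul_one, sq_abs]
  ring

lemma norm_sub_le_of_norm_sub_inner_smul_le {u v e z : F} {c δ : ℝ} (hu : ‖u‖ = 1)
    (hv : ‖v‖ = 1) (he : ‖e‖ = 1) (hue : ⟪u, e⟫ = c) (hve : ⟪v, e⟫ = c) (hc : 0 < c)
    (hz : ‖z‖ = 1) (hzu : ‖z - ⟪u, z⟫ • u‖ ≤ δ) (hzv : ‖z - ⟪v, z⟫ • v‖ ≤ δ) :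
    ‖u - v‖ ≤ 4 * (1 + c⁻¹) * δ := by
  have hδ : 0 ≤ δ := (norm_nonneg _).trans hzu
  have hc' : 0 ≤ c⁻¹ := by positivity
  rcases le_or_gt δ (1 / 2) with hsmall | hlarge
  · set a := ⟪u, z⟫
    set b := ⟪v, z⟫
    have ha : 1 / 2 ≤ |a| := by
      have hsq : (1 / 2) ^ 2 ≤ |a| ^ 2 := by
        rw [sq_abs]
        nlinarith [norm_sub_inner_smul_sq hu z, norm_nonneg (z - a • u)]
      exact (pow_le_pow_iff_left₀ (by norm_num) (abs_nonneg a) two_ne_zero).mp hsq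
    have hab : ‖a • u - b • v‖ ≤ 2 * δ := by
      calc ‖a • u - b • v‖ = ‖(z - b • v) - (z - a • u)‖ := by congr 1; abel
        _ ≤ 2 * δ := by grw [norm_sub_le, hzu, hzv]; linarith
    calc ‖u - v‖ ≤ 2 * (|a| * ‖u - v‖) := by nlinarith [norm_nonneg (u - v)]
      _ ≤ 2 * ((1 + c⁻¹) * (2 * δ)) := by grw [abs_mul_norm_sub_le hv he hue hve hc, hab]
      _ = 4 * (1 + c⁻¹) * δ := by ring
  · calc ‖u - v‖ ≤ 2 := by grw [norm_sub_le, hu, hv]; norm_num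
      _ ≤ 4 * (1 + c⁻¹) * δ := by nlinarith

end InnerProductSpace

lemma vec3_cos_sin_one (θ : ℝ) : vec3 (Real.cos θ) (Real.sin θ) 1 = Real.sqrt 2 • gam θ := by
  rw [gam, smul_smul, mul_inv_cancel₀ (by positivity), one_smul]

lemma norm_gam (θ : ℝ) : ‖gam θ‖ = 1 := by
  have hvec : ‖vec3 (Real.cos θ) (Real.sin θ) 1‖ = Real.sqrt 2 := by
    rw [vec3, EuclideanSpace.norm_eq]
    congr 1
    simp [Fin.sum_univ_three, Real.cos_sq_add_sin_sq]
    norm_num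
  rw [gam, norm_smul, hvec, norm_inv, Real.norm_of_nonneg (Real.sqrt_nonneg 2),
    inv_mul_cancel₀ (by positivity)]

lemma inner_gam_single_two (θ : ℝ) :
    inner ℝ (gam θ) (EuclideanSpace.single 2 1) = (Real.sqrt 2)⁻¹ := by
  rw [gam, real_inner_smul_left, EuclideanSpace.inner_single_right]
  simp [vec3]

lemma projθ_eq_sub (θ : ℝ) (z : E3) : projθ θ z = z - inner ℝ (gam θ) z • gam θ := by
  rw [projθ, Submodule.coe_orthogonalProjectionOnto_apply,
    ← Submodule.starProjection_unit_singleton ℝ (norm_gam θ) z]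
  exact eq_sub_of_add_eq' (Submodule.starProjection_add_starProjection_orthogonal z)

/-- There is an absolute constant `C ≥ 1` such that whenever `|z| = 1`,
`δ > 0`, and `θ₁, θ₂ ∈ [0, 2π)` satisfy `|π_{θ₁}(z)| ≤ δ` and `|π_{θ₂}(z)| ≤ δ`, then
`|(cos θ₁, sin θ₁, 1) − (cos θ₂, sin θ₂, 1)| ≤ Cδ`. -/
theorem stmt7 :
    ∃ C : ℝ, 1 ≤ C ∧
      ∀ z : E3, ‖z‖ = 1 → ∀ δ : ℝ, 0 < δ →
        ∀ θ₁ ∈ Set.Ico (0 : ℝ) (2 * π), ∀ θ₂ ∈ Set.Ico (0 : ℝ) (2 * π),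
          ‖projθ θ₁ z‖ ≤ δ → ‖projθ θ₂ z‖ ≤ δ →
            ‖vec3 (Real.cos θ₁) (Real.sin θ₁) 1 - vec3 (Real.cos θ₂) (Real.sin θ₂) 1‖
              ≤ C * δ := by
  refine ⟨14, by norm_num, fun z hz δ hδ θ₁ _ θ₂ _ h₁ h₂ => ?_⟩
  have hgam : ‖gam θ₁ - gam θ₂‖ ≤ 4 * (1 + Real.sqrt 2) * δ := by
    rw [projθ_eq_sub] at h₁ h₂
    simpa only [inv_inv] using norm_sub_le_of_norm_sub_inner_smul_le (norm_gam θ₁) (norm_gam θ₂)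
      (by simp) (inner_gam_single_two θ₁) (inner_gam_single_two θ₂) (by positivity) hz h₁ h₂
  have hsqrt2 : Real.sqrt 2 * Real.sqrt 2 = 2 := Real.mul_self_sqrt zero_le_two
  have hsqrt2_le : Real.sqrt 2 ≤ 3 / 2 := by nlinarith [Real.sqrt_nonneg 2]
  calc ‖vec3 (Real.cos θ₁) (Real.sin θ₁) 1 - vec3 (Real.cos θ₂) (Real.sin θ₂) 1‖
      = Real.sqrt 2 * ‖gam θ₁ - gam θ₂‖ := by
        rw [vec3_cos_sin_one, vec3_cos_sin_one, ← smul_sub, norm_smul,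
          Real.norm_of_nonneg (Real.sqrt_nonneg 2)]
    _ ≤ Real.sqrt 2 * (4 * (1 + Real.sqrt 2) * δ) := by gcongr
    _ = (4 * Real.sqrt 2 + 8) * δ := by linear_combination 4 * δ * hsqrt2
    _ ≤ 14 * δ := by gcongr; linarith
end

section
/- There exists an absolute constant c > 0 with the following property. For every Lebesgue-measurable set H ⊂ [0, 2π) with H¹(H) = λ > 0, there exist measurable subsets H₁, H₂, H₃ ⊂ H such that H¹(H_j) ≥ c λ² for each j ∈ {1, 2, 3}, and dist(H_i, H_j) ≥ c λ for all 1 ≤ i < j ≤ 3. -/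
open MeasureTheory Real Set

/-!
The distribution function `x ↦ |H ∩ (-∞, x]|` is monotone and 1-Lipschitz, so by the
intermediate value theorem it takes the values `λ/3` and `2λ/3` at points `x₁ ≤ x₂`; this cuts
`H` into three consecutive thirds of measure `λ/3`. Deleting from the second and third piece an
initial interval of length `g = λ/100` costs at most `g` each, so the pieces keep measure
`≥ λ/3 - λ/100 ≥ λ²/100` (as `λ ≤ 2π`) and are pairwise at distance `≥ g`.
-/

noncomputable def cumulativeVolume (s : Set ℝ) (x : ℝ) : ℝ := volume.real (s ∩ Iic x)

section

variable {s : Set ℝ}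

theorem cumulativeVolume_mono (hs : volume s ≠ ⊤) : Monotone (cumulativeVolume s) :=
  fun _ _ hxy => measureReal_mono (inter_subset_inter_right s (Iic_subset_Iic.2 hxy))
    (measure_inter_ne_top_of_left_ne_top hs)

theorem cumulativeVolume_le_add_volume_real_inter_Ioc (hs : volume s ≠ ⊤) (x y : ℝ) :
    cumulativeVolume s y ≤ cumulativeVolume s x + volume.real (s ∩ Ioc x y) := by
  have hcover : s ∩ Iic y ⊆ (s ∩ Iic x) ∪ (s ∩ Ioc x y) := fun z ⟨hzs, hzy⟩ =>
    (le_or_gt z x).imp (fun hzx => ⟨hzs, hzx⟩) (fun hxz => ⟨hzs, hxz, hzy⟩)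
  exact (measureReal_mono hcover (measure_ne_top_of_subset
    (union_subset inter_subset_left inter_subset_left) hs)).trans (measureReal_union_le _ _)

theorem cumulativeVolume_le_add (hs : volume s ≠ ⊤) {x y : ℝ} (hxy : x ≤ y) :
    cumulativeVolume s y ≤ cumulativeVolume s x + (y - x) := by
  have hIoc : volume.real (s ∩ Ioc x y) ≤ volume.real (Ioc x y) :=
    measureReal_mono inter_subset_right (by simp)
  linarith [cumulativeVolume_le_add_volume_real_inter_Ioc hs x y, volume_real_Ioc_of_le hxy]

theorem lipschitzWith_one_cumulativeVolume (hs : volume s ≠ ⊤) :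
    LipschitzWith 1 (cumulativeVolume s) :=
  LipschitzWith.of_le_add fun x y => by
    rcases le_total x y with hxy | hyx
    · exact (cumulativeVolume_mono hs hxy).trans (le_add_of_nonneg_right dist_nonneg)
    · simpa [Real.dist_eq, abs_of_nonneg (sub_nonneg.2 hyx)] using cumulativeVolume_le_add hs hyx

theorem cumulativeVolume_eq_zero_of_subset_Ici {a : ℝ} (hs : s ⊆ Ici a) :
    cumulativeVolume s a = 0 :=
  measureReal_mono_null (s₂ := {a}) (fun _ ⟨hzs, hza⟩ => le_antisymm hza (hs hzs))
    (by simp [Measure.real]) (by simp)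

theorem cumulativeVolume_eq_volume_real_of_subset_Iic {b : ℝ} (hs : s ⊆ Iic b) :
    cumulativeVolume s b = volume.real s := by
  rw [cumulativeVolume, inter_eq_left.2 hs]

theorem exists_cumulativeVolume_eq (hs : volume s ≠ ⊤) {a b : ℝ} (hsab : s ⊆ Icc a b) {t : ℝ}
    (ht₀ : 0 ≤ t) (ht : t ≤ volume.real s) : ∃ x, cumulativeVolume s x = t :=
  intermediate_value_univ a b (lipschitzWith_one_cumulativeVolume hs).continuous
    ⟨(cumulativeVolume_eq_zero_of_subset_Ici fun _ h => (hsab h).1).symm ▸ ht₀,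
     (cumulativeVolume_eq_volume_real_of_subset_Iic fun _ h => (hsab h).2).symm ▸ ht⟩

theorem ofReal_cumulativeVolume_sub_sub_le_volume_inter_Ioc (hs : volume s ≠ ⊤) {g : ℝ}
    (hg : 0 ≤ g) (x y : ℝ) :
    ENNReal.ofReal (cumulativeVolume s y - cumulativeVolume s x - g) ≤
      volume (s ∩ Ioc (x + g) y) := by
  rw [← ofReal_measureReal (measure_inter_ne_top_of_left_ne_top hs)]
  refine ENNReal.ofReal_le_ofReal ?_
  linarith [cumulativeVolume_le_add_volume_real_inter_Ioc hs (x + g) y,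
    cumulativeVolume_le_add hs (le_add_of_nonneg_right hg : x ≤ x + g)]

end

theorem le_abs_sub_of_mem_Ioc {a b u v w z g : ℝ} (ha : a ∈ Ioc u v) (hb : b ∈ Ioc (w + g) z)
    (hvw : v ≤ w) : g ≤ |a - b| :=
  le_abs.2 (Or.inr (by linarith [ha.2, hb.1]))

/-- There is an absolute constant `c > 0` such that every Lebesgue
measurable set `H ⊆ [0, 2π)` of measure `λ > 0` contains three measurable subsets
`H₁, H₂, H₃` with `H¹(H_j) ≥ c λ²` for each `j`, and `dist(H_i, H_j) ≥ c λ` for `i ≠ j`. -/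
theorem stmt12 :
    ∃ c : ℝ, 0 < c ∧
      ∀ (H : Set ℝ), H ⊆ Set.Ico (0 : ℝ) (2 * π) → MeasurableSet H →
        ∀ lam : ℝ, 0 < lam → volume H = ENNReal.ofReal lam →
          ∃ H₁ H₂ H₃ : Set ℝ,
            H₁ ⊆ H ∧ H₂ ⊆ H ∧ H₃ ⊆ H ∧
            MeasurableSet H₁ ∧ MeasurableSet H₂ ∧ MeasurableSet H₃ ∧
            ENNReal.ofReal (c * lam ^ 2) ≤ volume H₁ ∧
            ENNReal.ofReal (c * lam ^ 2) ≤ volume H₂ ∧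
            ENNReal.ofReal (c * lam ^ 2) ≤ volume H₃ ∧
            (∀ a ∈ H₁, ∀ b ∈ H₂, c * lam ≤ |a - b|) ∧
            (∀ a ∈ H₁, ∀ b ∈ H₃, c * lam ≤ |a - b|) ∧
            (∀ a ∈ H₂, ∀ b ∈ H₃, c * lam ≤ |a - b|) := by
  refine ⟨1 / 100, by norm_num, fun H hH hHm lam hlam hvol => ?_⟩
  have hfin : volume H ≠ ⊤ := hvol ▸ ENNReal.ofReal_ne_top
  have hHIcc : H ⊆ Icc 0 (2 * π) := hH.trans Ico_subset_Icc_self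
  have hvol_real : volume.real H = lam := by simp [Measure.real, hvol, hlam.le]
  have hlam_le : lam ≤ 2 * π := by
    simpa [hvol_real, pi_pos.le] using measureReal_mono (μ := volume) hH (by simp [ENNReal.mul_ne_top])
  obtain ⟨x₁, hx₁⟩ := exists_cumulativeVolume_eq hfin hHIcc (t := lam / 3) (by positivity)
    (by linarith)
  obtain ⟨x₂, hx₂⟩ := exists_cumulativeVolume_eq hfin hHIcc (t := 2 * lam / 3) (by positivity)
    (by linarith)
  have hx₁₂ : x₁ ≤ x₂ := ((cumulativeVolume_mono hfin).reflect_lt (by linarith)).le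
  have hF₀ := cumulativeVolume_eq_zero_of_subset_Ici fun _ h => (hHIcc h).1
  have hF₃ := cumulativeVolume_eq_volume_real_of_subset_Iic fun _ h => (hHIcc h).2
  have hpiece : ∀ x y, cumulativeVolume H y - cumulativeVolume H x = lam / 3 →
      ENNReal.ofReal (1 / 100 * lam ^ 2) ≤ volume (H ∩ Ioc (x + 1 / 100 * lam) y) :=
    fun x y hxy => (ENNReal.ofReal_le_ofReal (by nlinarith [pi_le_four])).trans
      (ofReal_cumulativeVolume_sub_sub_le_volume_inter_Ioc hfin (by positivity) x y)
  refine ⟨H ∩ Ioc (0 + 1 / 100 * lam) x₁, H ∩ Ioc (x₁ + 1 / 100 * lam) x₂,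
    H ∩ Ioc (x₂ + 1 / 100 * lam) (2 * π), inter_subset_left, inter_subset_left,
    inter_subset_left, hHm.inter measurableSet_Ioc, hHm.inter measurableSet_Ioc,
    hHm.inter measurableSet_Ioc, hpiece _ _ (by linarith), hpiece _ _ (by linarith),
    hpiece _ _ (by linarith), fun a ha b hb => le_abs_sub_of_mem_Ioc ha.2 hb.2 le_rfl,
    fun a ha b hb => le_abs_sub_of_mem_Ioc ha.2 hb.2 hx₁₂,
    fun a ha b hb => le_abs_sub_of_mem_Ioc ha.2 hb.2 le_rfl⟩
end
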